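/- Let μ, r̂ > 0, 0 < α < 1, and let L ≥ 1 be an integer. Then for every r > 0, ∑_{i=0}^∞ |δ_i| · r^{αi + αμL − 1} / Γ(αi + αμL) < r^{αμL − 1} · Γ(αμ)^L · ∑_{i=0}^∞ (2·μ·L·Γ(α(1+μ))·(r/r̂)^α)^i / Γ(iα + αμL), where the series on the right-hand side is the Mittag-Leffler series E_{α, αμL}(2·μ·L·(r/r̂)^α·Γ(α(1+μ))) and both series converge. -/

import Mathlib

/-! The coefficients δ_i are those of `A(z)^L`, where `A(z) = ∑ Γ(α(l+μ)) (-μ r̂^(-α) z)^l / l!`: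
the recursion is J. C. P. Miller's formula for the coefficients of a power, read off from
`A · (A^L)' = L · A' · A^L`. Log-convexity of Γ (Gautschi's inequality `Γ(x+α) ≤ x^α Γ(x)`)
together with `Γ > 1/2` on `(0, ∞)` gives `|a_l| ≤ Γ(αμ) c^l` with `c = 2 μ Γ(α(1+μ)) r̂^(-α)`,
hence `|δ_i| ≤ Γ(αμ)^L (cL)^i`, strictly for `i = 1`. The claim follows by comparing termwise
with the Mittag-Leffler series, which converges by the ratio test because `Γ(z+α)/Γ(z) → ∞`. -/

open MeasureTheory Real

/-- The recursively defined coefficients δ_i. -/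
noncomputable def deltaCoef (α μ rh : ℝ) (L : ℕ) : ℕ → ℝ
  | 0 => Real.Gamma (α * μ) ^ L
  | (i + 1) =>
      (1 / (((i : ℝ) + 1) * Real.Gamma (α * μ))) *
        ∑ l ∈ Finset.range (i + 1),
          deltaCoef α μ rh L (i - l) *
            ((((l : ℝ) + 1) * (L : ℝ) + ((l : ℝ) + 1) - ((i : ℝ) + 1)) *
              Real.Gamma (α * (((l : ℝ) + 1) + μ)) *
              (-μ * rh ^ (-α)) ^ (l + 1) / (Nat.factorial (l + 1) : ℝ))
  termination_by i => i
  decreasing_by omega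

open Filter PowerSeries Finset

namespace Real

theorem one_half_lt_Gamma {x : ℝ} (hx : 0 < x) : 1 / 2 < Gamma x := by
  obtain ⟨x₀, ⟨h₁, h₂⟩, hmin⟩ := exists_isMinOn_Gamma_Ioi
  have hsucc : Gamma 2 ≤ Gamma (x₀ + 1) :=
    Gamma_strictMonoOn_Ici.monotoneOn (by simp) (by simp; linarith) (by linarith)
  rw [Gamma_two, Gamma_add_one (by positivity)] at hsucc
  have hpos := Gamma_pos_of_pos (zero_lt_one.trans h₁)
  exact (by nlinarith : 1 / 2 < Gamma x₀).trans_le (hmin hx)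

theorem sub_one_le_two_mul_Gamma {x : ℝ} (hx : 0 < x) : x - 1 ≤ 2 * Gamma x := by
  rcases le_or_gt x 1 with hx1 | hx1
  · linarith [Gamma_pos_of_pos hx]
  · have h := one_half_lt_Gamma (sub_pos.2 hx1)
    have hx' : x = (x - 1) + 1 := by ring
    rw [hx', Gamma_add_one (by linarith), ← hx']
    nlinarith

theorem Gamma_add_le_Gamma_mul_rpow {x a : ℝ} (hx : 0 < x) (ha0 : 0 < a) (ha1 : a < 1) :
    Gamma (x + a) ≤ Gamma x * x ^ a := by
  have h := Gamma_mul_add_mul_le_rpow_Gamma_mul_rpow_Gamma (s := x) (t := x + 1)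
    (by linarith) (by linarith) (sub_pos.2 ha1) ha0 (sub_add_cancel 1 a)
  have hG := Gamma_pos_of_pos hx
  rwa [show (1 - a) * x + a * (x + 1) = x + a by ring, Gamma_add_one hx.ne', mul_comm x,
    mul_rpow hG.le hx.le, ← mul_assoc, ← rpow_add hG, sub_add_cancel, rpow_one] at h

theorem mul_Gamma_le_Gamma_add_mul_rpow {x a : ℝ} (hx : 0 < x) (ha0 : 0 < a) (ha1 : a < 1) :
    x * Gamma x ≤ Gamma (x + a) * (x + a) ^ (1 - a) := by
  have hxa : 0 < x + a := by linarith
  have h := Gamma_mul_add_mul_le_rpow_Gamma_mul_rpow_Gamma (s := x + a) (t := x + a + 1)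
    hxa (by linarith) ha0 (sub_pos.2 ha1) (add_sub_cancel a 1)
  have hG := Gamma_pos_of_pos hxa
  rwa [show a * (x + a) + (1 - a) * (x + a + 1) = x + 1 by ring, Gamma_add_one hx.ne',
    Gamma_add_one hxa.ne', mul_comm (x + a), mul_rpow hG.le hxa.le, ← mul_assoc,
    ← rpow_add hG, add_sub_cancel, rpow_one] at h

theorem tendsto_Gamma_add_div_Gamma_atTop {a : ℝ} (ha0 : 0 < a) (ha1 : a < 1) :
    Tendsto (fun x => Gamma (x + a) / Gamma x) atTop atTop := by
  refine tendsto_atTop_mono' _ ?_ <|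
    ((tendsto_rpow_atTop ha0).comp (tendsto_atTop_add_const_right _ a tendsto_id)).atTop_div_const
      two_pos
  filter_upwards [eventually_ge_atTop a] with x hx
  have hx0 : 0 < x := ha0.trans_le hx
  have hxa : 0 < x + a := by linarith
  have hp : 0 < (x + a) ^ (1 - a) := rpow_pos_of_pos hxa _
  have hsplit : (x + a) ^ a * (x + a) ^ (1 - a) = x + a := by
    rw [← rpow_add hxa, add_sub_cancel, rpow_one]
  have key : (x + a) ^ a / 2 * Gamma x * (x + a) ^ (1 - a) ≤ Gamma (x + a) * (x + a) ^ (1 - a) := by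
    have := Gamma_pos_of_pos hx0
    calc _ = (x + a) / 2 * Gamma x := by linear_combination Gamma x / 2 * hsplit
      _ ≤ x * Gamma x := by gcongr; linarith
      _ ≤ _ := mul_Gamma_le_Gamma_add_mul_rpow hx0 ha0 ha1
  rw [Function.comp_apply, id, le_div_iff₀ (Gamma_pos_of_pos hx0)]
  exact le_of_mul_le_mul_right key hp

theorem rpow_le_succ_mul_two_mul_Gamma {x z a : ℝ} (n : ℕ) (hz : 0 < z) (hx0 : 0 ≤ x)
    (hx : x + 1 ≤ z + n) (ha0 : 0 ≤ a) (ha1 : a ≤ 1) : x ^ a ≤ (n + 1) * (2 * Gamma z) := by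
  have h1 : 1 ≤ 2 * Gamma z := by linarith [one_half_lt_Gamma hz]
  have h2 := sub_one_le_two_mul_Gamma hz
  have hn : (0 : ℝ) ≤ n := n.cast_nonneg
  rcases le_or_gt x 1 with hx1 | hx1
  · calc x ^ a ≤ 1 := rpow_le_one hx0 hx1 ha0
      _ ≤ _ := by nlinarith
  · calc x ^ a ≤ x := rpow_le_self_of_one_le hx1.le ha1
      _ ≤ _ := by nlinarith [mul_le_mul_of_nonneg_left h1 hn]

theorem Gamma_add_mul_le {y a : ℝ} (hy : 0 < y) (ha0 : 0 < a) (ha1 : a < 1) (l : ℕ) :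
    Gamma (y + l * a) ≤ l.factorial * Gamma y * (2 * Gamma (y + a)) ^ l := by
  have hG := Gamma_pos_of_pos hy
  have hG' := Gamma_pos_of_pos (add_pos hy ha0)
  induction l with
  | zero => simp
  | succ l ih =>
    rcases l.eq_zero_or_pos with rfl | hl
    · simp only [zero_add, Nat.cast_one, one_mul, Nat.factorial_one, pow_one]
      nlinarith [one_half_lt_Gamma hy]
    have hyl : 0 < y + l * a := by positivity
    have hl' : (1 : ℝ) ≤ l := by exact_mod_cast hl
    have hpow : (y + l * a) ^ a ≤ (l + 1) * (2 * Gamma (y + a)) :=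
      rpow_le_succ_mul_two_mul_Gamma l (by linarith) hyl.le (by nlinarith) ha0.le ha1.le
    calc Gamma (y + (l + 1 : ℕ) * a) = Gamma (y + l * a + a) := by push_cast; ring_nf
      _ ≤ Gamma (y + l * a) * (y + l * a) ^ a := Gamma_add_le_Gamma_mul_rpow hyl ha0 ha1
      _ ≤ (l.factorial * Gamma y * (2 * Gamma (y + a)) ^ l) * ((l + 1) * (2 * Gamma (y + a))) := by
        gcongr
      _ = _ := by push_cast [Nat.factorial_succ]; ring

end Real

theorem summable_pow_div_Gamma_mul_add {α : ℝ} (hα0 : 0 < α) (hα1 : α < 1) (x β : ℝ) :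
    Summable fun i : ℕ => x ^ i / Gamma (i * α + β) := by
  refine summable_of_ratio_norm_eventually_le (r := 1 / 2) (by norm_num) ?_
  have hz : Tendsto (fun n : ℕ => (n : ℝ) * α + β) atTop atTop :=
    tendsto_atTop_add_const_right _ β (tendsto_natCast_atTop_atTop.atTop_mul_const hα0)
  filter_upwards [hz.eventually ((tendsto_Gamma_add_div_Gamma_atTop hα0 hα1).eventually_ge_atTop
    (2 * |x|)), hz.eventually_gt_atTop 0] with n hratio hpos
  have hG := Gamma_pos_of_pos hpos
  have hG' := Gamma_pos_of_pos (add_pos hpos hα0)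
  rw [le_div_iff₀ hG] at hratio
  rw [Nat.cast_succ, show ((n : ℝ) + 1) * α + β = n * α + β + α by ring, norm_div, norm_div,
    norm_pow, norm_pow, Real.norm_eq_abs, Real.norm_eq_abs, Real.norm_eq_abs, abs_of_pos hG,
    abs_of_pos hG', div_le_iff₀ hG', pow_succ]
  calc |x| ^ n * |x| = 1 / 2 * (|x| ^ n / Gamma (n * α + β)) * (2 * |x| * Gamma (n * α + β)) := by
        field_simp
    _ ≤ _ := by gcongr

theorem sum_range_pow_le_add_one_pow {R : Type*} [CommSemiring R] [PartialOrder R]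
    [IsStrictOrderedRing R] {x : R} (hx : 0 ≤ x) (n : ℕ) :
    ∑ k ∈ Finset.range (n + 1), x ^ k ≤ (x + 1) ^ n := by
  rw [add_pow]
  refine Finset.sum_le_sum fun k hk => ?_
  rw [one_pow, mul_one]
  exact le_mul_of_one_le_right (pow_nonneg hx k)
    (Nat.one_le_cast.2 (Nat.choose_pos (Nat.lt_succ_iff.1 (Finset.mem_range.1 hk))))

namespace PowerSeries

theorem coeff_zero_mul_coeff_succ_pow {R : Type*} [CommRing R] (g : R⟦X⟧)
    (L i : ℕ) :
    ((i : R) + 1) * coeff 0 g * coeff (i + 1) (g ^ L) =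
      ∑ l ∈ range (i + 1), (((l : R) + 1) * L + ((l : R) + 1) - ((i : R) + 1)) *
        coeff (l + 1) g * coeff (i - l) (g ^ L) := by
  have hderiv : g * d⁄dX R (g ^ L) = (L : R) • (d⁄dX R g * g ^ L) := by
    rw [Derivation.leibniz_pow]
    rcases L with _ | L
    · simp
    · rw [nsmul_eq_mul, smul_eq_mul, Nat.add_sub_cancel, pow_succ, ← map_natCast (C (R := R)),
        smul_eq_C_mul]
      ring
  have hc := congrArg (coeff i) hderiv
  rw [map_smul, coeff_mul, coeff_mul] at hc
  simp only [coeff_derivative, smul_eq_mul] at hc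
  -- both split `∑_{p+q=i+1} q a_p b_q`; comparing them isolates `(i+1) a_0 b_{i+1}`
  have hfirst := Finset.Nat.sum_antidiagonal_succ
    (f := fun p => coeff p.1 g * (coeff p.2 (g ^ L) * p.2)) (n := i)
  have hlast := Finset.Nat.sum_antidiagonal_succ'
    (f := fun p => coeff p.1 g * (coeff p.2 (g ^ L) * p.2)) (n := i)
  rw [← Finset.Nat.sum_antidiagonal_eq_sum_range_succ
    (fun l m => (((l : R) + 1) * L + ((l : R) + 1) - ((i : R) + 1)) *
        coeff (l + 1) g * coeff m (g ^ L))]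
  simp only [Nat.cast_add, Nat.cast_one, Nat.cast_zero, mul_zero, zero_add] at hfirst hlast
  have hsplit : ∑ p ∈ antidiagonal i,
      (((p.1 : R) + 1) * L + ((p.1 : R) + 1) - ((i : R) + 1)) * coeff (p.1 + 1) g *
        coeff p.2 (g ^ L) =
      L * ∑ p ∈ antidiagonal i, coeff (p.1 + 1) g * ((p.1 : R) + 1) * coeff p.2 (g ^ L) -
        ∑ p ∈ antidiagonal i, coeff (p.1 + 1) g * (coeff p.2 (g ^ L) * p.2) := by
    rw [mul_sum, ← sum_sub_distrib]
    refine sum_congr rfl fun p hp => ?_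
    rw [← mem_antidiagonal.1 hp, Nat.cast_add]
    ring
  rw [hsplit, ← hc]
  linear_combination hlast - hfirst

theorem abs_coeff_pow_le {p : ℝ⟦X⟧} {G c : ℝ} (hG : 0 ≤ G) (hc : 0 ≤ c)
    (hp : ∀ l, |coeff l p| ≤ G * c ^ l) (n i : ℕ) :
    |coeff i (p ^ n)| ≤ G ^ n * (c * n) ^ i := by
  induction n generalizing i with
  | zero =>
    rw [pow_zero, coeff_one]
    split_ifs with h <;> simp [h]
  | succ n ih =>
    rw [pow_succ, coeff_mul]
    calc |∑ q ∈ antidiagonal i, coeff q.1 (p ^ n) * coeff q.2 p|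
        ≤ ∑ q ∈ antidiagonal i, G ^ n * (c * n) ^ q.1 * (G * c ^ q.2) := by
          refine (Finset.abs_sum_le_sum_abs _ _).trans (Finset.sum_le_sum fun q _ => ?_)
          rw [abs_mul]
          exact mul_le_mul (ih _) (hp _) (abs_nonneg _) (by positivity)
      _ = G ^ (n + 1) * c ^ i * ∑ k ∈ Finset.range (i + 1), (n : ℝ) ^ k := by
          rw [← Finset.Nat.sum_antidiagonal_eq_sum_range_succ (fun k _ => (n : ℝ) ^ k), mul_sum]
          refine sum_congr rfl fun q hq => ?_
          rw [← mem_antidiagonal.1 hq, pow_add]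
          ring
      _ ≤ G ^ (n + 1) * c ^ i * ((n : ℝ) + 1) ^ i := by
          gcongr
          exact sum_range_pow_le_add_one_pow n.cast_nonneg i
      _ = G ^ (n + 1) * (c * (n + 1 : ℕ)) ^ i := by rw [mul_pow]; push_cast; ring

theorem abs_coeff_one_pow_lt {p : ℝ⟦X⟧} {G c : ℝ} (hp0 : |coeff 0 p| ≤ G)
    (hp1 : |coeff 1 p| < G * c) {n : ℕ} (hn : n ≠ 0) :
    |coeff 1 (p ^ n)| < G ^ n * (c * n) ^ 1 := by
  have hG : 0 < G := by
    have hG0 : 0 ≤ G := (abs_nonneg _).trans hp0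
    refine hG0.lt_of_ne fun h => ?_
    rw [← h, zero_mul] at hp1
    exact (abs_nonneg _).not_gt hp1
  have hn' : (0 : ℝ) < n := by positivity
  rw [coeff_one_pow, ← coeff_zero_eq_constantCoeff_apply, abs_mul, abs_mul, abs_pow,
    Nat.abs_cast]
  calc n * |coeff 1 p| * |coeff 0 p| ^ (n - 1) ≤ n * |coeff 1 p| * G ^ (n - 1) := by gcongr
    _ < n * (G * c) * G ^ (n - 1) := by gcongr
    _ = G ^ n * (c * n) ^ 1 := by
      rw [pow_one, ← Nat.sub_add_cancel (Nat.one_le_iff_ne_zero.2 hn), pow_succ]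
      push_cast
      ring

end PowerSeries

noncomputable def deltaBaseSeries (α μ rh : ℝ) : ℝ⟦X⟧ :=
  PowerSeries.mk fun l => Gamma (α * (l + μ)) * (-μ * rh ^ (-α)) ^ l / l.factorial

theorem deltaCoef_eq_coeff_pow {α μ : ℝ} (rh : ℝ) (L : ℕ) (hG : Gamma (α * μ) ≠ 0) (i : ℕ) :
    deltaCoef α μ rh L i = coeff i (deltaBaseSeries α μ rh ^ L) := by
  induction i using Nat.strong_induction_on with
  | _ i ih =>
    rcases i with _ | i
    · simp [deltaCoef, deltaBaseSeries, coeff_zero_eq_constantCoeff_apply]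
    · have h0 : coeff 0 (deltaBaseSeries α μ rh) = Gamma (α * μ) := by simp [deltaBaseSeries]
      have hmiller := coeff_zero_mul_coeff_succ_pow (deltaBaseSeries α μ rh) L i
      rw [h0] at hmiller
      rw [deltaCoef, eq_comm, ← mul_right_inj' (mul_ne_zero (by positivity : (i : ℝ) + 1 ≠ 0) hG),
        hmiller, one_div, ← mul_assoc, mul_inv_cancel₀ (mul_ne_zero (by positivity) hG), one_mul]
      refine sum_congr rfl fun l hl => ?_
      rw [ih (i - l) (by omega), deltaBaseSeries, coeff_mk]
      push_cast
      ring

theorem abs_coeff_deltaBaseSeries_le {α μ rh : ℝ} (hμ : 0 < μ) (hα0 : 0 < α) (hα1 : α < 1)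
    (hrh : 0 ≤ rh) (l : ℕ) :
    |coeff l (deltaBaseSeries α μ rh)| ≤
      Gamma (α * μ) * (2 * Gamma (α * (1 + μ)) * μ * rh ^ (-α)) ^ l := by
  have hρ : 0 ≤ μ * rh ^ (-α) := mul_nonneg hμ.le (rpow_nonneg hrh _)
  have hGamma := Gamma_add_mul_le (mul_pos hα0 hμ) hα0 hα1 l
  rw [show α * μ + l * α = α * (l + μ) by ring, show α * μ + α = α * (1 + μ) by ring] at hGamma
  rw [deltaBaseSeries, coeff_mk, abs_div, abs_mul, abs_pow, neg_mul, abs_neg, abs_of_nonneg hρ,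
    abs_of_pos (Gamma_pos_of_pos (by positivity)), Nat.abs_cast,
    div_le_iff₀ (by positivity)]
  calc Gamma (α * (l + μ)) * (μ * rh ^ (-α)) ^ l
      ≤ l.factorial * Gamma (α * μ) * (2 * Gamma (α * (1 + μ))) ^ l * (μ * rh ^ (-α)) ^ l := by
        gcongr
    _ = _ := by
      rw [show 2 * Gamma (α * (1 + μ)) * μ * rh ^ (-α) =
        2 * Gamma (α * (1 + μ)) * (μ * rh ^ (-α)) by ring, mul_pow]
      ring

theorem abs_coeff_one_deltaBaseSeries_lt {α μ rh : ℝ} (hμ : 0 < μ) (hα0 : 0 < α) (hrh : 0 < rh) :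
    |coeff 1 (deltaBaseSeries α μ rh)| <
      Gamma (α * μ) * (2 * Gamma (α * (1 + μ)) * μ * rh ^ (-α)) ^ 1 := by
  have hpos : 0 < Gamma (α * (1 + μ)) * μ * rh ^ (-α) :=
    mul_pos (mul_pos (Gamma_pos_of_pos (by positivity)) hμ) (rpow_pos_of_pos hrh _)
  have hhalf := one_half_lt_Gamma (mul_pos hα0 hμ)
  rw [deltaBaseSeries, coeff_mk, Nat.cast_one, Nat.factorial_one, Nat.cast_one, div_one, pow_one,
    pow_one, neg_mul, mul_neg, abs_neg, ← mul_assoc, abs_of_pos hpos]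
  nlinarith

theorem abs_deltaCoef_le {α μ rh : ℝ} (hμ : 0 < μ) (hα0 : 0 < α) (hα1 : α < 1) (hrh : 0 ≤ rh)
    (L i : ℕ) :
    |deltaCoef α μ rh L i| ≤
      Gamma (α * μ) ^ L * (2 * Gamma (α * (1 + μ)) * μ * rh ^ (-α) * L) ^ i := by
  rw [deltaCoef_eq_coeff_pow rh L (Gamma_pos_of_pos (mul_pos hα0 hμ)).ne']
  exact abs_coeff_pow_le (Gamma_pos_of_pos (mul_pos hα0 hμ)).le
    (mul_nonneg (by positivity) (rpow_nonneg hrh _))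
    (abs_coeff_deltaBaseSeries_le hμ hα0 hα1 hrh) L i

theorem abs_deltaCoef_one_lt {α μ rh : ℝ} (hμ : 0 < μ) (hα0 : 0 < α) (hrh : 0 < rh) {L : ℕ}
    (hL : L ≠ 0) :
    |deltaCoef α μ rh L 1| <
      Gamma (α * μ) ^ L * (2 * Gamma (α * (1 + μ)) * μ * rh ^ (-α) * L) ^ 1 := by
  rw [deltaCoef_eq_coeff_pow rh L (Gamma_pos_of_pos (mul_pos hα0 hμ)).ne']
  refine abs_coeff_one_pow_lt ?_ (by simpa using abs_coeff_one_deltaBaseSeries_lt hμ hα0 hrh) hL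
  simp [deltaBaseSeries, abs_of_pos (Gamma_pos_of_pos (mul_pos hα0 hμ))]

theorem summable_abs_mul_rpow_div_Gamma_and_tsum_lt {d : ℕ → ℝ} {A C α β r : ℝ}
    (hα0 : 0 < α) (hα1 : α < 1) (hβ : 0 < β) (hr : 0 < r) (hd : ∀ i, |d i| ≤ A * C ^ i)
    {i₀ : ℕ} (hi₀ : |d i₀| < A * C ^ i₀) :
    Summable (fun i : ℕ => |d i| * r ^ (α * i + β - 1) / Gamma (α * i + β)) ∧
      ∑' i : ℕ, |d i| * r ^ (α * i + β - 1) / Gamma (α * i + β) <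
        r ^ (β - 1) * A * ∑' i : ℕ, (C * r ^ α) ^ i / Gamma (i * α + β) := by
  set w : ℕ → ℝ := fun i => (r ^ α) ^ i * r ^ (β - 1) / Gamma (i * α + β)
  have hw : ∀ i, 0 < w i := fun i =>
    div_pos (by positivity) (Gamma_pos_of_pos (by positivity))
  have hf : ∀ i : ℕ, |d i| * r ^ (α * i + β - 1) / Gamma (α * i + β) = |d i| * w i := fun i => by
    rw [add_sub_assoc, rpow_add hr, rpow_mul_natCast hr.le, mul_comm α]
    ring
  have hg : ∀ i : ℕ, r ^ (β - 1) * A * ((C * r ^ α) ^ i / Gamma (i * α + β)) = A * C ^ i * w i :=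
    fun i => by ring
  have hsum : Summable fun i : ℕ => r ^ (β - 1) * A * ((C * r ^ α) ^ i / Gamma (i * α + β)) :=
    (summable_pow_div_Gamma_mul_add hα0 hα1 _ β).mul_left _
  have hle : ∀ i : ℕ, |d i| * r ^ (α * i + β - 1) / Gamma (α * i + β) ≤
      r ^ (β - 1) * A * ((C * r ^ α) ^ i / Gamma (i * α + β)) := fun i => by
    rw [hf, hg]
    exact mul_le_mul_of_nonneg_right (hd i) (hw i).le
  have hlt : |d i₀| * r ^ (α * i₀ + β - 1) / Gamma (α * i₀ + β) <
      r ^ (β - 1) * A * ((C * r ^ α) ^ i₀ / Gamma (i₀ * α + β)) := by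
    rw [hf, hg]
    exact mul_lt_mul_of_pos_right hi₀ (hw i₀)
  have hnonneg : ∀ i : ℕ, 0 ≤ |d i| * r ^ (α * i + β - 1) / Gamma (α * i + β) := fun i => by
    rw [hf]
    exact mul_nonneg (abs_nonneg _) (hw i).le
  refine ⟨hsum.of_nonneg_of_le hnonneg hle, ?_⟩
  rw [← tsum_mul_left]
  exact hsum.tsum_lt_tsum_of_nonneg hnonneg hle hlt

/-- Mittag-Leffler bound on the absolute sum-PDF series for 0 < α < 1. -/
theorem sum_pdf_series_lt_mittagLeffler
    (α μ rh : ℝ) (hμ : 0 < μ) (hrh : 0 < rh) (hα0 : 0 < α) (hα1 : α < 1)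
    (L : ℕ) (hL : 1 ≤ L) (r : ℝ) (hr : 0 < r) :
    Summable (fun i : ℕ =>
      |deltaCoef α μ rh L i| * r ^ (α * (i : ℝ) + α * μ * (L : ℝ) - 1) /
        Real.Gamma (α * (i : ℝ) + α * μ * (L : ℝ))) ∧
    Summable (fun i : ℕ =>
      (2 * μ * (L : ℝ) * Real.Gamma (α * (1 + μ)) * (r / rh) ^ α) ^ i /
        Real.Gamma ((i : ℝ) * α + α * μ * (L : ℝ))) ∧
    (∑' i : ℕ,
        |deltaCoef α μ rh L i| * r ^ (α * (i : ℝ) + α * μ * (L : ℝ) - 1) /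
          Real.Gamma (α * (i : ℝ) + α * μ * (L : ℝ))) <
      r ^ (α * μ * (L : ℝ) - 1) * Real.Gamma (α * μ) ^ L *
        ∑' i : ℕ,
          (2 * μ * (L : ℝ) * Real.Gamma (α * (1 + μ)) * (r / rh) ^ α) ^ i /
            Real.Gamma ((i : ℝ) * α + α * μ * (L : ℝ)) := by
  have hβ : 0 < α * μ * L := by positivity
  have hx : 2 * μ * L * Gamma (α * (1 + μ)) * (r / rh) ^ α =
      2 * Gamma (α * (1 + μ)) * μ * rh ^ (-α) * L * r ^ α := by
    rw [div_rpow hr.le hrh.le, rpow_neg hrh.le]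
    ring
  simp only [hx]
  obtain ⟨hsum, hlt⟩ := summable_abs_mul_rpow_div_Gamma_and_tsum_lt hα0 hα1 hβ hr
    (abs_deltaCoef_le hμ hα0 hα1 hrh.le L) (abs_deltaCoef_one_lt hμ hα0 hrh (by omega))
  exact ⟨hsum, summable_pow_div_Gamma_mul_add hα0 hα1 _ _, hlt⟩
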